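/- Let X : ℝ × ℝ → ℝ³ be a smooth solution of the vortex-pair equation with T := X_s ≠ 0 everywhere. Then the modulus of the tangent vector satisfies ‖T‖·∂_t‖T‖ = −(ε x₁/(x₁² + r_c²))·((T × T_s)·e₁)/‖T‖ at every point (s,t). -/

import Mathlib

noncomputable def cross3 (a b : Fin 3 → ℝ) : Fin 3 → ℝ :=
  ![a 1 * b 2 - a 2 * b 1, a 2 * b 0 - a 0 * b 2, a 0 * b 1 - a 1 * b 0]

noncomputable def norm3 (a : Fin 3 → ℝ) : ℝ :=
  Real.sqrt ((a 0) ^ 2 + (a 1) ^ 2 + (a 2) ^ 2)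

noncomputable def dot3 (a b : Fin 3 → ℝ) : ℝ :=
  a 0 * b 0 + a 1 * b 1 + a 2 * b 2

noncomputable def e1 : Fin 3 → ℝ := ![1, 0, 0]

lemma norm3_pos {a : Fin 3 → ℝ} (h : a ≠ 0) : 0 < norm3 a := by
  have hs : 0 < a 0 ^ 2 + a 1 ^ 2 + a 2 ^ 2 := by
    by_contra hc
    push_neg at hc
    have e0 : a 0 = 0 := by
      have : a 0 ^ 2 = 0 := le_antisymm (by nlinarith [sq_nonneg (a 1), sq_nonneg (a 2)]) (sq_nonneg _)
      exact pow_eq_zero_iff (two_ne_zero) |>.1 this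
    have e1 : a 1 = 0 := by
      have : a 1 ^ 2 = 0 := le_antisymm (by nlinarith [sq_nonneg (a 0), sq_nonneg (a 2)]) (sq_nonneg _)
      exact pow_eq_zero_iff (two_ne_zero) |>.1 this
    have e2 : a 2 = 0 := by
      have : a 2 ^ 2 = 0 := le_antisymm (by nlinarith [sq_nonneg (a 0), sq_nonneg (a 1)]) (sq_nonneg _)
      exact pow_eq_zero_iff (two_ne_zero) |>.1 this
    apply h
    funext i
    fin_cases i <;> simpa using (by assumption : _)
  exact Real.sqrt_pos.2 hs

lemma norm3_sq (a : Fin 3 → ℝ) : norm3 a ^ 2 = a 0 ^ 2 + a 1 ^ 2 + a 2 ^ 2 := by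
  have : (0:ℝ) ≤ a 0 ^ 2 + a 1 ^ 2 + a 2 ^ 2 := by positivity
  rw [norm3, Real.sq_sqrt this]

/-- for a smooth solution of the vortex-pair equation with `T := X_s ≠ 0`,
`‖T‖ ∂_t ‖T‖ = -(ε x₁/(x₁²+r_c²)) ((T × T_s)·e₁)/‖T‖` at every point. -/
theorem stmt1 (ε rc : ℝ) (hε : 0 < ε) (hrc : 0 < rc)
    (X : ℝ → ℝ → Fin 3 → ℝ)
    (hX : ContDiff ℝ (⊤ : ℕ∞) (fun p : ℝ × ℝ => X p.1 p.2))
    (T : ℝ → ℝ → Fin 3 → ℝ)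
    (hT : ∀ s t, T s t = deriv (fun σ => X σ t) s)
    (hT0 : ∀ s t, T s t ≠ 0)
    (hPDE : ∀ s t,
      deriv (fun τ => X s τ) t =
        (1 / norm3 (T s t) ^ 3) •
          cross3 (T s t) (deriv (fun σ => T σ t) s)
        - (ε * X s t 0 / ((X s t 0) ^ 2 + rc ^ 2) / norm3 (T s t)) •
          cross3 (T s t) e1) :
    ∀ s t : ℝ,
      norm3 (T s t) * deriv (fun τ => norm3 (T s τ)) t
        = -(ε * X s t 0 / ((X s t 0) ^ 2 + rc ^ 2)) *
            (dot3 (cross3 (T s t) (deriv (fun σ => T σ t) s)) e1 / norm3 (T s t)) := by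
  intro s t
  set F : ℝ × ℝ → Fin 3 → ℝ := fun p => X p.1 p.2 with hFdef
  have hXd : Differentiable ℝ F := hX.differentiable (by simp)
  have hG : ContDiff ℝ (⊤ : ℕ∞) (fderiv ℝ F) := hX.fderiv_right (by simp)
  have hGd : Differentiable ℝ (fderiv ℝ F) := hG.differentiable (by simp)
  have lineS : ∀ t s : ℝ, HasDerivAt (fun σ : ℝ => (σ, t)) ((1 : ℝ), (0 : ℝ)) s := fun t s =>
    (hasDerivAt_id s).prodMk (hasDerivAt_const s t)
  have lineT : ∀ s t : ℝ, HasDerivAt (fun τ : ℝ => (s, τ)) ((0 : ℝ), (1 : ℝ)) t := fun s t =>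
    (hasDerivAt_const t s).prodMk (hasDerivAt_id t)
  -- partial derivatives as fderiv applications
  have hTs' : ∀ s t : ℝ, HasDerivAt (fun σ => X σ t) (fderiv ℝ F (s, t) (1, 0)) s := fun s t =>
    by have := (hXd (s, t)).hasFDerivAt.comp_hasDerivAt s (lineS t s); exact this
  have hXt' : ∀ s t : ℝ, HasDerivAt (fun τ => X s τ) (fderiv ℝ F (s, t) (0, 1)) t := fun s t =>
    by have := (hXd (s, t)).hasFDerivAt.comp_hasDerivAt t (lineT s t); exact this
  have hTval : ∀ s t : ℝ, T s t = fderiv ℝ F (s, t) (1, 0) := fun s t =>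
    (hT s t).trans (hTs' s t).deriv
  set Xt : ℝ → ℝ → Fin 3 → ℝ := fun s t => deriv (fun τ => X s τ) t with hXtdef
  have hXtval : ∀ s t : ℝ, Xt s t = fderiv ℝ F (s, t) (0, 1) := fun s t => (hXt' s t).deriv
  set f'' := fderiv ℝ (fderiv ℝ F) (s, t) with hf''def
  have hsymm : f'' (0, 1) (1, 0) = f'' (1, 0) (0, 1) :=
    second_derivative_symmetric (fun y => (hXd y).hasFDerivAt) (hGd (s, t)).hasFDerivAt _ _
  -- derivative of T in t
  have hTt : HasDerivAt (fun τ => T s τ) (f'' (0, 1) (1, 0)) t := by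
    have h1 : HasFDerivAt (fun p : ℝ × ℝ => fderiv ℝ F p (1, 0))
        ((ContinuousLinearMap.apply ℝ (Fin 3 → ℝ) ((1 : ℝ), (0 : ℝ))).comp f'') (s, t) :=
      (ContinuousLinearMap.apply ℝ (Fin 3 → ℝ) ((1 : ℝ), (0 : ℝ))).hasFDerivAt.comp (s, t)
        (hGd (s, t)).hasFDerivAt
    have h2 := h1.comp_hasDerivAt t (lineT s t)
    have h3 : (fun τ => T s τ) = fun τ => fderiv ℝ F (s, τ) (1, 0) :=
      funext fun τ => hTval s τ
    rw [h3]
    exact h2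
  -- derivative of Xt in s
  have hXts : HasDerivAt (fun σ => Xt σ t) (f'' (1, 0) (0, 1)) s := by
    have h1 : HasFDerivAt (fun p : ℝ × ℝ => fderiv ℝ F p (0, 1))
        ((ContinuousLinearMap.apply ℝ (Fin 3 → ℝ) ((0 : ℝ), (1 : ℝ))).comp f'') (s, t) :=
      (ContinuousLinearMap.apply ℝ (Fin 3 → ℝ) ((0 : ℝ), (1 : ℝ))).hasFDerivAt.comp (s, t)
        (hGd (s, t)).hasFDerivAt
    have h2 := h1.comp_hasDerivAt s (lineS t s)
    have h3 : (fun σ => Xt σ t) = fun σ => fderiv ℝ F (σ, t) (0, 1) :=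
      funext fun σ => hXtval σ t
    rw [h3]
    exact h2
  -- derivative of T in s
  have hTsD : HasDerivAt (fun σ => T σ t) (f'' (1, 0) (1, 0)) s := by
    have h1 : HasFDerivAt (fun p : ℝ × ℝ => fderiv ℝ F p (1, 0))
        ((ContinuousLinearMap.apply ℝ (Fin 3 → ℝ) ((1 : ℝ), (0 : ℝ))).comp f'') (s, t) :=
      (ContinuousLinearMap.apply ℝ (Fin 3 → ℝ) ((1 : ℝ), (0 : ℝ))).hasFDerivAt.comp (s, t)
        (hGd (s, t)).hasFDerivAt
    have h2 := h1.comp_hasDerivAt s (lineS t s)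
    have h3 : (fun σ => T σ t) = fun σ => fderiv ℝ F (σ, t) (1, 0) :=
      funext fun σ => hTval σ t
    rw [h3]
    exact h2
  set Dss := f'' (1, 0) (1, 0) with hDss
  set Dst := f'' (1, 0) (0, 1) with hDst
  have hTsval : deriv (fun σ => T σ t) s = Dss := hTsD.deriv
  -- orthogonality: T · Xt = 0 everywhere
  have hortho : ∀ σ : ℝ, dot3 (T σ t) (Xt σ t) = 0 := by
    intro σ
    have h := hPDE σ t
    show dot3 (T σ t) (Xt σ t) = 0
    rw [hXtdef]
    simp only [h, dot3, cross3, e1, Pi.sub_apply, Pi.smul_apply, smul_eq_mul,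
      Matrix.cons_val_zero, Matrix.cons_val_one, Matrix.head_cons,
      Matrix.cons_val_two, Matrix.tail_cons]
    ring
  -- component-wise derivatives
  have cT : ∀ i : Fin 3, HasDerivAt (fun σ => T σ t i) (Dss i) s := fun i =>
    (ContinuousLinearMap.proj (R := ℝ) (φ := fun _ : Fin 3 => ℝ) i).hasFDerivAt.comp_hasDerivAt
      s hTsD
  have cX : ∀ i : Fin 3, HasDerivAt (fun σ => Xt σ t i) (Dst i) s := fun i =>
    (ContinuousLinearMap.proj (R := ℝ) (φ := fun _ : Fin 3 => ℝ) i).hasFDerivAt.comp_hasDerivAt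
      s hXts
  have cTt : ∀ i : Fin 3, HasDerivAt (fun τ => T s τ i) (f'' (0, 1) (1, 0) i) t := fun i =>
    (ContinuousLinearMap.proj (R := ℝ) (φ := fun _ : Fin 3 => ℝ) i).hasFDerivAt.comp_hasDerivAt
      t hTt
  -- product rule on g = T·Xt ≡ 0
  have key : dot3 Dss (Xt s t) + dot3 (T s t) Dst = 0 := by
    have hgD : HasDerivAt (fun σ => dot3 (T σ t) (Xt σ t))
        (dot3 Dss (Xt s t) + dot3 (T s t) Dst) s := by
      have h := (((cT 0).mul (cX 0)).add ((cT 1).mul (cX 1))).add ((cT 2).mul (cX 2))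
      convert h using 1
      · rfl
      · rfl
      · ext σ; simp [dot3]
      · simp [dot3]; ring
    have hg0 : (fun σ => dot3 (T σ t) (Xt σ t)) = fun _ => (0 : ℝ) := funext hortho
    have h := hgD.deriv
    rw [hg0, deriv_const] at h
    linarith
  -- derivative of the norm
  have hq : HasDerivAt (fun τ => (T s τ 0) ^ 2 + (T s τ 1) ^ 2 + (T s τ 2) ^ 2)
      (2 * dot3 (T s t) (f'' (0, 1) (1, 0))) t := by
    have h := (((cTt 0).pow 2).add ((cTt 1).pow 2)).add ((cTt 2).pow 2)
    convert h using 1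
    · rfl
    · rfl
    · ext τ; simp
    · simp [dot3]; ring
  have hnpos : 0 < norm3 (T s t) := norm3_pos (hT0 s t)
  have hqne : (T s t 0) ^ 2 + (T s t 1) ^ 2 + (T s t 2) ^ 2 ≠ 0 := by
    have := norm3_sq (T s t); nlinarith
  have hsqrt : HasDerivAt (fun τ => norm3 (T s τ))
      ((2 * dot3 (T s t) (f'' (0, 1) (1, 0))) /
        (2 * Real.sqrt ((T s t 0) ^ 2 + (T s t 1) ^ 2 + (T s t 2) ^ 2))) t := hq.sqrt hqne
  have hnd : deriv (fun τ => norm3 (T s τ)) t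
      = dot3 (T s t) (f'' (0, 1) (1, 0)) / norm3 (T s t) := by
    rw [hsqrt.deriv]
    have : Real.sqrt ((T s t 0) ^ 2 + (T s t 1) ^ 2 + (T s t 2) ^ 2) = norm3 (T s t) := rfl
    rw [this]
    field_simp
  -- put it together
  have hTtXts : dot3 (T s t) (f'' (0, 1) (1, 0)) = - dot3 Dss (Xt s t) := by
    have : dot3 (T s t) (f'' (0, 1) (1, 0)) = dot3 (T s t) Dst := by rw [hsymm]
    linarith [key, this ▸ key]
  have lhs_eq : norm3 (T s t) * deriv (fun τ => norm3 (T s τ)) t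
      = - dot3 Dss (Xt s t) := by
    rw [hnd, hTtXts]
    field_simp
  rw [lhs_eq]
  -- final algebra using the PDE
  have hP := hPDE s t
  rw [hTsval] at hP ⊢
  have hXtP : Xt s t = (1 / norm3 (T s t) ^ 3) • cross3 (T s t) Dss
      - (ε * X s t 0 / ((X s t 0) ^ 2 + rc ^ 2) / norm3 (T s t)) • cross3 (T s t) e1 := hP
  rw [hXtP]
  simp only [dot3, cross3, e1, Pi.sub_apply, Pi.smul_apply, smul_eq_mul,
    Matrix.cons_val_zero, Matrix.cons_val_one, Matrix.head_cons,
    Matrix.cons_val_two, Matrix.tail_cons]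
  field_simp
  ring
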